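/- Suppose there are finitely many active messages, and each message m has a queue time qt(m) and a process time pt(m) with qt(m) < pt(m). Each message has a source rank and a destination rank, drawn from a finite set of ranks A. For a rank a and time t, let q_a(t) be the number of messages with source rank a whose queue time is strictly less than t, and p_a(t) the number of messages with destination rank a whose process time is strictly less than t. Assume there are times t⁻_a < t⁺_a for every rank a and a synchronization time t̄ with t⁻_a < t̄ < t⁺_a for all a, such that for every rank a: p_a(t⁻_a) = p_a(t⁺_a), q_a(t⁻_a) = q_a(t⁺_a), and moreover Σ_a q_a(t⁻_a) = Σ_a p_a(t⁻_a). Then for every pair of ranks (a,b) and every message m from a to b, if qt(m) < t⁻_a then pt(m) < t⁻_b; that is, every message queued by rank a before t⁻_a has been processed by its destination rank b before t⁻_b. -/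

import Mathlib

/-! At the synchronization time `t̄`, each rank's counters have not moved since `t⁻_a`, because
they are monotone in time and agree at `t⁻_a` and `t⁺_a`. Hence the global counts of queued and
processed messages at `t̄` equal the two sums of the hypothesis and so coincide. Every message
processed before `t̄` was queued before `t̄`, so equal counts force every message queued before
`t̄` to be processed before `t̄`, that is, before `t⁻_b` at its destination rank `b`. -/

open Finset

theorem Monotone.finset_eq_of_card_eq {α β : Type*} [Preorder α] {S : α → Finset β}
    (hS : Monotone S) {t₁ t₂ t₃ : α} (h₁₂ : t₁ ≤ t₂) (h₂₃ : t₂ ≤ t₃) (h : #(S t₁) = #(S t₃)) :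
    S t₁ = S t₂ :=
  eq_of_subset_of_card_le (hS h₁₂) (h ▸ card_le_card (hS h₂₃))

theorem Finset.lt_of_card_filter_lt_le {ι α : Type*} [Fintype ι] [Preorder α] [DecidableLT α]
    {f g : ι → α} (hfg : ∀ i, f i ≤ g i) {t : α}
    (hcard : #{i | f i < t} ≤ #{i | g i < t}) {i : ι} (hi : f i < t) : g i < t := by
  have hsub : ({i | g i < t} : Finset ι) ⊆ ({i | f i < t} : Finset ι) := fun j hj ↦ by
    simp only [mem_filter, mem_univ, true_and] at hj ⊢
    exact (hfg j).trans_lt hj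
  have hmem : i ∈ ({i | g i < t} : Finset ι) := by
    rw [eq_of_subset_of_card_le hsub hcard]
    exact mem_filter.2 ⟨mem_univ i, hi⟩
  exact (mem_filter.1 hmem).2

section EventsBefore

variable {A M α : Type*} [Fintype M] [DecidableEq A] [Preorder α] [DecidableLT α]

/-- With `rank = src` and `time = qt` its card is `q_a(t)`; with `dst` and `pt` it is `p_a(t)`. -/
def eventsBefore (rank : M → A) (time : M → α) (a : A) (t : α) : Finset M :=
  {m | rank m = a ∧ time m < t}

theorem eventsBefore_mono (rank : M → A) (time : M → α) (a : A) :
    Monotone (eventsBefore rank time a) := fun _ _ hst _ hm ↦ by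
  simp only [eventsBefore, mem_filter, mem_univ, true_and] at hm ⊢
  exact ⟨hm.1, hm.2.trans_le hst⟩

theorem sum_card_eventsBefore [Fintype A] (rank : M → A) (time : M → α) (t : α) :
    ∑ a, #(eventsBefore rank time a t) = #{m | time m < t} := by
  rw [card_eq_sum_card_fiberwise (f := rank) (t := univ) fun _ _ ↦ mem_univ _]
  refine sum_congr rfl fun a _ ↦ congrArg card ?_
  ext m
  simp [eventsBefore, and_comm]

end EventsBefore

/-- Model of TaskTorrent's distributed completion algorithm (Lemma 1,
communication part): ranks form a finite type `A`, active messages a finite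
type `M` with source `src`, destination `dst`, queue time `qt` and process
time `pt`, where each message is processed strictly after it is queued.
If there are times `tm a < tbar < tp a` for every rank `a` such that the
queued and processed counts of each rank agree at `tm a` and `tp a`, and the
total queued count equals the total processed count at the times `tm a`,
then every message queued by its source rank `a` before `tm a` has been
processed by its destination rank `b` before `tm b`. -/
theorem tasktorrent_completion_time_sequence
    {A M : Type*} [Fintype A] [Fintype M] [DecidableEq A]
    (src dst : M → A) (qt pt : M → ℝ)
    (hqp : ∀ m, qt m < pt m)
    (tm tp : A → ℝ) (tbar : ℝ)
    (hsync : ∀ a, tm a < tbar ∧ tbar < tp a)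
    (hp : ∀ a, (Finset.univ.filter (fun m => dst m = a ∧ pt m < tm a)).card
             = (Finset.univ.filter (fun m => dst m = a ∧ pt m < tp a)).card)
    (hq : ∀ a, (Finset.univ.filter (fun m => src m = a ∧ qt m < tm a)).card
             = (Finset.univ.filter (fun m => src m = a ∧ qt m < tp a)).card)
    (hsum : ∑ a : A, (Finset.univ.filter (fun m => src m = a ∧ qt m < tm a)).card
          = ∑ a : A, (Finset.univ.filter (fun m => dst m = a ∧ pt m < tm a)).card) :
    ∀ m : M, qt m < tm (src m) → pt m < tm (dst m) := by
  intro m hm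
  have hQ : ∀ a, eventsBefore src qt a (tm a) = eventsBefore src qt a tbar := fun a ↦
    (eventsBefore_mono src qt a).finset_eq_of_card_eq (hsync a).1.le (hsync a).2.le (hq a)
  have hP : ∀ a, eventsBefore dst pt a (tm a) = eventsBefore dst pt a tbar := fun a ↦
    (eventsBefore_mono dst pt a).finset_eq_of_card_eq (hsync a).1.le (hsync a).2.le (hp a)
  have hcard : #{m | qt m < tbar} ≤ #{m | pt m < tbar} := by
    rw [← sum_card_eventsBefore src, ← sum_card_eventsBefore dst]
    simp_rw [← hQ, ← hP]
    exact hsum.le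
  have hpt : pt m < tbar :=
    lt_of_card_filter_lt_le (fun m ↦ (hqp m).le) hcard (hm.trans (hsync (src m)).1)
  have hmem : m ∈ eventsBefore dst pt (dst m) (tm (dst m)) := by
    rw [hP]
    exact mem_filter.2 ⟨mem_univ m, rfl, hpt⟩
  exact (mem_filter.1 hmem).2.2
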